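/- arXiv:2208.09449 — 4 statements merged into one kernel-verified Lean document; each statement's English description precedes it below -/
import Mathlib

section
/- Let w, x ∈ R^d, y ∈ {−1, 1}, ε > 0. The maximum of the logistic loss log(1 + exp(−y·w·(x + Δ))) over all Δ with ‖Δ‖ ≤ ε equals log(1 + exp(−y·w·x + ε‖w‖_*)), attained at Δ* = −ε y v where v satisfies v·w = ‖w‖_* and ‖v‖ ≤ 1. -/
/-- worst-case adversarial perturbation for logistic loss. -/
theorem adversarial_logistic_loss
    {d : ℕ} (w x : Fin d → ℝ) (y : ℝ) (hy : y = 1 ∨ y = -1)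
    (ε : ℝ) (hε : 0 < ε)
    (N : (Fin d → ℝ) → ℝ)
    (hN0 : ∀ z, 0 ≤ N z)
    (hNdef : ∀ z, N z = 0 ↔ z = 0)
    (hNhom : ∀ (a : ℝ) (z : Fin d → ℝ), N (a • z) = |a| * N z)
    (hNtri : ∀ z z', N (z + z') ≤ N z + N z')
    (Nd : ℝ)
    (hNd : IsLUB ((fun z => ∑ i, w i * z i) '' {z | N z ≤ 1}) Nd)
    (v : Fin d → ℝ) (hv1 : ∑ i, v i * w i = Nd) (hv2 : N v ≤ 1) :
    IsGreatest
      ((fun Δ => Real.log (1 + Real.exp (-(y * ∑ i, w i * (x i + Δ i))))) ''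
        {Δ | N Δ ≤ ε})
      (Real.log (1 + Real.exp (-(y * ∑ i, w i * x i) + ε * Nd))) ∧
    N ((-(ε * y)) • v) ≤ ε ∧
    Real.log (1 + Real.exp (-(y * ∑ i, w i * (x i + ((-(ε * y)) • v) i))))
      = Real.log (1 + Real.exp (-(y * ∑ i, w i * x i) + ε * Nd)) := by
  have hy2 : y * y = 1 := by rcases hy with h | h <;> simp [h]
  have hyabs : |y| = 1 := by rcases hy with h | h <;> simp [h]
  -- upper bound for the linear functional on the ε-ball
  have hub : ∀ z : Fin d → ℝ, N z ≤ ε → (∑ i, w i * z i) ≤ ε * Nd := by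
    intro z hz
    have h1 : N ((1 / ε) • z) ≤ 1 := by
      rw [hNhom, abs_of_pos (by positivity), div_mul_eq_mul_div, one_mul,
        div_le_one hε]
      exact hz
    have h2 : (∑ i, w i * ((1 / ε) • z) i) ≤ Nd := hNd.1 ⟨(1 / ε) • z, h1, rfl⟩
    have h3 : (∑ i, w i * ((1 / ε) • z) i) = (1 / ε) * ∑ i, w i * z i := by
      simp [Finset.mul_sum]
      exact Finset.sum_congr rfl fun i _ => by ring
    rw [h3] at h2
    calc ∑ i, w i * z i = ε * ((1 / ε) * ∑ i, w i * z i) := by field_simp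
      _ ≤ ε * Nd := mul_le_mul_of_nonneg_left h2 hε.le
  have habs : ∀ z : Fin d → ℝ, N z ≤ ε → |∑ i, w i * z i| ≤ ε * Nd := by
    intro z hz
    refine abs_le.2 ⟨?_, hub z hz⟩
    have hneg : N (-z) ≤ ε := by
      rw [show -z = (-1 : ℝ) • z from (neg_one_smul ℝ z).symm, hNhom]
      simpa using hz
    have := hub (-z) hneg
    simp only [Pi.neg_apply, mul_neg, Finset.sum_neg_distrib] at this
    linarith
  -- the second claim
  have hmem : N ((-(ε * y)) • v) ≤ ε := by
    rw [hNhom]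
    have : |(-(ε * y))| = ε := by
      rw [abs_neg, abs_mul, hyabs, abs_of_pos hε, mul_one]
    rw [this]
    calc ε * N v ≤ ε * 1 := mul_le_mul_of_nonneg_left hv2 hε.le
      _ = ε := mul_one ε
  -- the third claim
  have hv1' : ∑ i, w i * v i = Nd := by
    rw [← hv1]; exact Finset.sum_congr rfl fun i _ => by ring
  have heq : -(y * ∑ i, w i * (x i + ((-(ε * y)) • v) i))
      = -(y * ∑ i, w i * x i) + ε * Nd := by
    have hsplit : ∑ i, w i * (x i + ((-(ε * y)) • v) i)
        = (∑ i, w i * x i) + (-(ε * y)) * ∑ i, w i * v i := by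
      rw [Finset.mul_sum, ← Finset.sum_add_distrib]
      exact Finset.sum_congr rfl fun i _ => by simp; ring
    rw [hsplit, hv1']
    linear_combination ε * Nd * hy2
  have heq3 : Real.log (1 + Real.exp (-(y * ∑ i, w i * (x i + ((-(ε * y)) • v) i))))
      = Real.log (1 + Real.exp (-(y * ∑ i, w i * x i) + ε * Nd)) := by rw [heq]
  refine ⟨⟨⟨(-(ε * y)) • v, hmem, heq3⟩, ?_⟩, hmem, heq3⟩
  rintro a ⟨Δ, hΔ, rfl⟩
  have hsplit : ∑ i, w i * (x i + Δ i) = (∑ i, w i * x i) + ∑ i, w i * Δ i := by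
    rw [← Finset.sum_add_distrib]
    exact Finset.sum_congr rfl fun i _ => by ring
  have hb : |∑ i, w i * Δ i| ≤ ε * Nd := habs Δ hΔ
  have ht : -(y * ∑ i, w i * (x i + Δ i)) ≤ -(y * ∑ i, w i * x i) + ε * Nd := by
    rw [hsplit]
    have : -(y * ∑ i, w i * Δ i) ≤ ε * Nd := by
      have h1 : |y * ∑ i, w i * Δ i| ≤ ε * Nd := by
        rw [abs_mul, hyabs, one_mul]; exact hb
      linarith [neg_abs_le (y * ∑ i, w i * Δ i)]
    linarith
  have := Real.exp_le_exp.2 ht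
  exact Real.log_le_log (by positivity) (by linarith)
end

section
/- Let w, x ∈ R^d, y ∈ {−1, 1}, ε > 0. The maximum of the hinge loss max(0, 1 − y·w·(x + Δ)) over all Δ with ‖Δ‖ ≤ ε equals max(0, 1 − y·w·x + ε‖w‖_*), attained at Δ* = −ε y v where v satisfies v·w = ‖w‖_* and ‖v‖ ≤ 1. -/
/-- worst-case adversarial perturbation for hinge loss. -/
theorem adversarial_hinge_loss
    {d : ℕ} (w x : Fin d → ℝ) (y : ℝ) (hy : y = 1 ∨ y = -1)
    (ε : ℝ) (hε : 0 < ε)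
    (N : (Fin d → ℝ) → ℝ)
    (hN0 : ∀ z, 0 ≤ N z)
    (hNdef : ∀ z, N z = 0 ↔ z = 0)
    (hNhom : ∀ (a : ℝ) (z : Fin d → ℝ), N (a • z) = |a| * N z)
    (hNtri : ∀ z z', N (z + z') ≤ N z + N z')
    (Nd : ℝ)
    (hNd : IsLUB ((fun z => ∑ i, w i * z i) '' {z | N z ≤ 1}) Nd)
    (v : Fin d → ℝ) (hv1 : ∑ i, v i * w i = Nd) (hv2 : N v ≤ 1) :
    IsGreatest
      ((fun Δ => max 0 (1 - y * ∑ i, w i * (x i + Δ i))) '' {Δ | N Δ ≤ ε})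
      (max 0 (1 - y * ∑ i, w i * x i + ε * Nd)) ∧
    N ((-(ε * y)) • v) ≤ ε ∧
    max 0 (1 - y * ∑ i, w i * (x i + ((-(ε * y)) • v) i))
      = max 0 (1 - y * ∑ i, w i * x i + ε * Nd) := by
  have hy2 : y * y = 1 := by rcases hy with h | h <;> simp [h]
  have hyabs : |y| = 1 := by rcases hy with h | h <;> simp [h]
  -- perturbation is admissible
  have hNstar : N ((-(ε * y)) • v) ≤ ε := by
    rw [hNhom, abs_neg, abs_mul, hyabs, abs_of_pos hε]
    nlinarith [hN0 v]
  -- value at the optimal perturbation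
  have hval : 1 - y * ∑ i, w i * (x i + ((-(ε * y)) • v) i)
      = 1 - y * ∑ i, w i * x i + ε * Nd := by
    have hsum : ∑ i, w i * (x i + ((-(ε * y)) • v) i)
        = ∑ i, w i * x i - (ε * y) * ∑ i, v i * w i := by
      rw [Finset.mul_sum, ← Finset.sum_sub_distrib]
      refine Finset.sum_congr rfl fun i _ => ?_
      simp [Pi.smul_apply, smul_eq_mul]; ring
    rw [hsum, hv1]; linear_combination ε * Nd * hy2
  -- upper bound for any admissible Δ
  have key : ∀ Δ : Fin d → ℝ, N Δ ≤ ε → -(y * ∑ i, w i * Δ i) ≤ ε * Nd := by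
    intro Δ hΔ
    have hz : N ((-(y / ε)) • Δ) ≤ 1 := by
      rw [hNhom, abs_neg, abs_div, hyabs, abs_of_pos hε]
      rw [div_mul_eq_mul_div, one_mul, div_le_one hε]
      exact hΔ
    have hub := hNd.1 ⟨(-(y / ε)) • Δ, hz, rfl⟩
    have hs : ∑ i, w i * ((-(y / ε)) • Δ) i = -(y / ε) * ∑ i, w i * Δ i := by
      rw [Finset.mul_sum]
      refine Finset.sum_congr rfl fun i _ => ?_
      simp [Pi.smul_apply, smul_eq_mul]; ring
    have hub2 : -(y / ε) * ∑ i, w i * Δ i ≤ Nd := by simpa only [hs] using hub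
    have heq : -(y * ∑ i, w i * Δ i) = ε * (-(y / ε) * ∑ i, w i * Δ i) := by
      field_simp
    rw [heq]
    exact mul_le_mul_of_nonneg_left hub2 hε.le
  refine ⟨⟨⟨(-(ε * y)) • v, hNstar, by simp only []; rw [hval]⟩, ?_⟩, hNstar, by rw [hval]⟩
  rintro t ⟨Δ, hΔ, rfl⟩
  refine max_le_max le_rfl ?_
  have hexp : ∑ i, w i * (x i + Δ i) = ∑ i, w i * x i + ∑ i, w i * Δ i := by
    rw [← Finset.sum_add_distrib]
    exact Finset.sum_congr rfl fun i _ => by ring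
  rw [hexp, mul_add]
  linarith [key Δ hΔ]
end

section
/- The hyperbolic tangent function σ(z) = tanh(z) can be written as σ = σ₁ − σ₂ where σ₁(z) = tanh(z) − z for z < 0 and σ₁(z) = z for z ≥ 0, and σ₂(z) = −z for z < 0 and σ₂(z) = z − tanh(z) for z ≥ 0; moreover σ₁ and σ₂ are convex and continuous on R. -/
open Real Set

private lemma tanh_hasDerivAt (x : ℝ) :
    HasDerivAt Real.tanh (1 / Real.cosh x ^ 2) x := by
  have h : HasDerivAt (fun y => Real.sinh y / Real.cosh y)
      ((Real.cosh x * Real.cosh x - Real.sinh x * Real.sinh x) / Real.cosh x ^ 2) x := by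
    exact (Real.hasDerivAt_sinh x).div (Real.hasDerivAt_cosh x)
      (ne_of_gt (Real.cosh_pos x))
  have heq : (Real.cosh x * Real.cosh x - Real.sinh x * Real.sinh x) / Real.cosh x ^ 2
      = 1 / Real.cosh x ^ 2 := by
    rw [← sq, ← sq, Real.cosh_sq_sub_sinh_sq]
  rw [heq] at h
  convert h using 1
  funext y
  exact Real.tanh_eq_sinh_div_cosh y

private lemma g_hasDerivAt (x : ℝ) :
    HasDerivAt (fun z => Real.tanh z - z) (1 / Real.cosh x ^ 2 - 1) x :=
  (tanh_hasDerivAt x).sub (hasDerivAt_id x)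

private lemma g_deriv : deriv (fun z => Real.tanh z - z) = fun x => 1 / Real.cosh x ^ 2 - 1 := by
  funext x; exact (g_hasDerivAt x).deriv

private lemma tanh_continuous : Continuous Real.tanh := by
  have : Differentiable ℝ Real.tanh := fun x => (tanh_hasDerivAt x).differentiableAt
  exact this.continuous

private lemma g_cont : Continuous (fun z => Real.tanh z - z) :=
  tanh_continuous.sub continuous_id

private lemma g_convex : ConvexOn ℝ (Iic (0:ℝ)) (fun z => Real.tanh z - z) := by
  apply MonotoneOn.convexOn_of_deriv (convex_Iic 0)
    ((tanh_continuous.sub continuous_id).continuousOn)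
    (fun x _ => ((g_hasDerivAt x).differentiableAt).differentiableWithinAt)
  rw [show (Real.tanh - id : ℝ → ℝ) = fun z => Real.tanh z - z from rfl]
  rw [g_deriv]
  intro x hx y hy hxy
  rw [interior_Iic] at hx hy
  have hcy : Real.cosh y ≤ Real.cosh x := by
    rw [Real.cosh_le_cosh]
    rw [abs_of_neg (mem_Iio.mp hx), abs_of_neg (mem_Iio.mp hy)]
    linarith
  have hy2 : (0:ℝ) < Real.cosh y ^ 2 := by positivity
  have hle : Real.cosh y ^ 2 ≤ Real.cosh x ^ 2 :=
    pow_le_pow_left₀ (Real.cosh_pos y).le hcy 2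
  have := one_div_le_one_div_of_le hy2 hle
  linarith

private lemma g_antitone : AntitoneOn (fun z => Real.tanh z - z) (Iic (0:ℝ)) := by
  apply antitoneOn_of_deriv_nonpos (convex_Iic 0)
    ((tanh_continuous.sub continuous_id).continuousOn)
    (fun x _ => ((g_hasDerivAt x).differentiableAt).differentiableWithinAt)
  intro x _
  rw [show (Real.tanh - id : ℝ → ℝ) = fun z => Real.tanh z - z from rfl]
  rw [g_deriv]
  have h1 : (1:ℝ) ≤ Real.cosh x := Real.one_le_cosh x
  have h2 : (1:ℝ) ≤ Real.cosh x ^ 2 := by nlinarith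
  have h3 : 1 / Real.cosh x ^ 2 ≤ 1 := by
    rw [div_le_one (by positivity)]; exact h2
  linarith

/-- DC decomposition of tanh. -/
theorem tanh_dc_decomposition :
    ∀ (σ₁ σ₂ : ℝ → ℝ),
      (σ₁ = fun z => if z < 0 then Real.tanh z - z else z) →
      (σ₂ = fun z => if z < 0 then -z else z - Real.tanh z) →
      (∀ z, Real.tanh z = σ₁ z - σ₂ z) ∧
      ConvexOn ℝ Set.univ σ₁ ∧ ConvexOn ℝ Set.univ σ₂ ∧
      Continuous σ₁ ∧ Continuous σ₂ := by
  intro σ₁ σ₂ h₁ h₂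
  -- σ₁ as composition
  have himg : (fun z : ℝ => min z 0) '' univ = Iic (0:ℝ) := by
    ext y
    simp only [image_univ, mem_range, mem_Iic]
    constructor
    · rintro ⟨x, rfl⟩; exact min_le_right x 0
    · intro hy; exact ⟨y, min_eq_left hy⟩
  have hmin : ConcaveOn ℝ univ (fun z : ℝ => min z 0) :=
    (concaveOn_id convex_univ).inf (concaveOn_const 0 convex_univ)
  have hmax : ConvexOn ℝ univ (fun z : ℝ => max z 0) :=
    (convexOn_id convex_univ).sup (convexOn_const 0 convex_univ)
  have hcomp : ConvexOn ℝ univ ((fun z => Real.tanh z - z) ∘ (fun z : ℝ => min z 0)) := by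
    apply ConvexOn.comp_concaveOn _ hmin
    · rw [himg]; exact g_antitone
    · rw [himg]; exact g_convex
  have hσ₁eq : σ₁ = fun z => ((fun z => Real.tanh z - z) ∘ (fun z : ℝ => min z 0)) z + max z 0 := by
    funext z
    rw [h₁]
    simp only [Function.comp_apply]
    by_cases hz : z < 0
    · rw [if_pos hz, min_eq_left hz.le, max_eq_right hz.le, add_zero]
    · push_neg at hz
      rw [if_neg (not_lt.mpr hz), min_eq_right hz, max_eq_left hz, Real.tanh_zero]
      ring
  have hσ₁conv : ConvexOn ℝ univ σ₁ := by
    rw [hσ₁eq]; exact hcomp.add hmax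
  have hσ₁cont : Continuous σ₁ := by
    rw [hσ₁eq]
    exact ((g_cont.comp (continuous_id.min continuous_const)).add
      (continuous_id.max continuous_const))
  -- σ₂ = σ₁ ∘ neg
  have hσ₂eq : σ₂ = σ₁ ∘ (fun z : ℝ => -z) := by
    funext z
    rw [h₁, h₂]
    simp only [Function.comp_apply]
    rcases lt_trichotomy z 0 with hz | hz | hz
    · rw [if_pos hz, if_neg (by linarith)]
    · subst hz; norm_num
    · rw [if_neg (not_lt.mpr hz.le), if_pos (by linarith), Real.tanh_neg]; ring
  have hσ₂conv : ConvexOn ℝ univ σ₂ := by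
    rw [hσ₂eq]
    have := hσ₁conv.comp_linearMap (-(LinearMap.id : ℝ →ₗ[ℝ] ℝ))
    exact this
  have hσ₂cont : Continuous σ₂ := by
    rw [hσ₂eq]; exact hσ₁cont.comp continuous_neg
  refine ⟨?_, hσ₁conv, hσ₂conv, hσ₁cont, hσ₂cont⟩
  intro z
  rw [h₁, h₂]
  by_cases hz : z < 0 <;> simp [hz]
end

section
/- The sigmoid function σ(z) = 1/(1 + e^{−z}) equals σ₁(z) − σ₂(z) where σ₁(z) = (1/2)(tanh(z/2) + 1 − z/2) for z < 0 and σ₁(z) = (1/2)(z/2 + 1) for z ≥ 0, and σ₂(z) = −z/4 for z < 0 and σ₂(z) = (1/2)(z/2 − tanh(z/2)) for z ≥ 0; moreover σ₁ and σ₂ are convex and continuous on R. -/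
open Real Set

/-- derivative of tanh(z/2) -/
lemma hasDerivAt_tanh_half (z : ℝ) :
    HasDerivAt (fun z : ℝ => Real.tanh (z / 2)) (1 / (2 * Real.cosh (z / 2) ^ 2)) z := by
  have h1 : HasDerivAt (fun z : ℝ => z / 2) (1 / 2) z := by
    simpa using (hasDerivAt_id z).div_const 2
  have hs : HasDerivAt (fun z : ℝ => Real.sinh (z / 2)) (Real.cosh (z / 2) * (1 / 2)) z :=
    HasDerivAt.comp (h₂ := Real.sinh) z (Real.hasDerivAt_sinh (z / 2)) h1
  have hc : HasDerivAt (fun z : ℝ => Real.cosh (z / 2)) (Real.sinh (z / 2) * (1 / 2)) z :=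
    HasDerivAt.comp (h₂ := Real.cosh) z (Real.hasDerivAt_cosh (z / 2)) h1
  have hcpos : (0 : ℝ) < Real.cosh (z / 2) := Real.cosh_pos _
  have hdiv := hs.div hc (ne_of_gt hcpos)
  have heq : (fun z : ℝ => Real.tanh (z / 2)) =
      fun z : ℝ => Real.sinh (z / 2) / Real.cosh (z / 2) := by
    funext x; rw [Real.tanh_eq_sinh_div_cosh]
  rw [heq]
  refine hdiv.congr_deriv ?_
  have hid : Real.cosh (z / 2) ^ 2 - Real.sinh (z / 2) ^ 2 = 1 := Real.cosh_sq_sub_sinh_sq _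
  have hc2 : Real.cosh (z / 2) ^ 2 ≠ 0 := by positivity
  field_simp
  linear_combination hid

/-- the smooth branch -/
noncomputable def gfun : ℝ → ℝ := fun z => (1 / 2) * (z / 2 - Real.tanh (z / 2))

lemma gfun_zero : gfun 0 = 0 := by simp [gfun, Real.tanh_zero]

lemma gfun_hasDerivAt (z : ℝ) :
    HasDerivAt gfun (1 / 4 - 1 / (4 * Real.cosh (z / 2) ^ 2)) z := by
  have h1 : HasDerivAt (fun z : ℝ => z / 2) (1 / 2) z := by
    simpa using (hasDerivAt_id z).div_const 2
  have h2 := (h1.sub (hasDerivAt_tanh_half z)).const_mul (1 / 2 : ℝ)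
  refine h2.congr_deriv ?_
  have hcpos : (0 : ℝ) < Real.cosh (z / 2) := Real.cosh_pos _
  have hc2 : Real.cosh (z / 2) ^ 2 ≠ 0 := by positivity
  field_simp
  ring

/-- the glued convex piece -/
noncomputable def Gfun : ℝ → ℝ := fun z => if z ≤ 0 then 0 else gfun z

/-- the derivative of `Gfun` -/
noncomputable def Dfun : ℝ → ℝ := fun z => 1 / 4 - 1 / (4 * Real.cosh (max z 0 / 2) ^ 2)

lemma Dfun_of_nonpos {z : ℝ} (hz : z ≤ 0) : Dfun z = 0 := by
  simp [Dfun, max_eq_right hz, Real.cosh_zero]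

lemma Gfun_hasDerivAt (z : ℝ) : HasDerivAt Gfun (Dfun z) z := by
  rcases lt_trichotomy z 0 with h | h | h
  · have hev : (fun _ : ℝ => (0 : ℝ)) =ᶠ[nhds z] Gfun := by
      filter_upwards [Iio_mem_nhds h] with x hx
      simp [Gfun, (mem_Iio.mp hx).le]
    have h0 : HasDerivAt (fun _ : ℝ => (0 : ℝ)) 0 z := hasDerivAt_const z 0
    rw [Dfun_of_nonpos h.le]
    exact h0.congr_of_eventuallyEq hev.symm
  · subst h
    have hD0 : Dfun 0 = 0 := Dfun_of_nonpos le_rfl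
    rw [hD0]
    have hIic : HasDerivWithinAt Gfun 0 (Iic 0) 0 := by
      have h0 : HasDerivWithinAt (fun _ : ℝ => (0 : ℝ)) 0 (Iic 0) 0 :=
        (hasDerivAt_const 0 0).hasDerivWithinAt
      refine h0.congr (fun x hx => ?_) (by simp [Gfun])
      simp [Gfun, (mem_Iic.mp hx)]
    have hg0 : HasDerivWithinAt gfun 0 (Ici 0) 0 := by
      have := (gfun_hasDerivAt 0).hasDerivWithinAt (s := Ici 0)
      simpa [Real.cosh_zero] using this
    have hIci : HasDerivWithinAt Gfun 0 (Ici 0) 0 := by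
      refine hg0.congr (fun x hx => ?_) (by simp [Gfun, gfun_zero])
      by_cases hx0 : x ≤ 0
      · have : x = 0 := le_antisymm hx0 (mem_Ici.mp hx)
        simp [Gfun, this, gfun_zero]
      · simp [Gfun, hx0]
    have := hIic.union hIci
    rw [Iic_union_Ici] at this
    exact this.hasDerivAt (by simp)
  · have hev : gfun =ᶠ[nhds z] Gfun := by
      filter_upwards [Ioi_mem_nhds h] with x hx
      simp [Gfun, not_le.mpr (mem_Ioi.mp hx)]
    have hD : Dfun z = 1 / 4 - 1 / (4 * Real.cosh (z / 2) ^ 2) := by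
      simp [Dfun, max_eq_left h.le]
    rw [hD]
    exact (gfun_hasDerivAt z).congr_of_eventuallyEq hev.symm

lemma Gfun_differentiable : Differentiable ℝ Gfun :=
  fun z => (Gfun_hasDerivAt z).differentiableAt

lemma Gfun_deriv : deriv Gfun = Dfun := funext fun z => (Gfun_hasDerivAt z).deriv

lemma Dfun_nonneg (z : ℝ) : 0 ≤ Dfun z := by
  have h1 : (1 : ℝ) ≤ Real.cosh (max z 0 / 2) := Real.one_le_cosh _
  have h2 : (1 : ℝ) ≤ Real.cosh (max z 0 / 2) ^ 2 := by nlinarith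
  have : 1 / (4 * Real.cosh (max z 0 / 2) ^ 2) ≤ 1 / 4 := by
    apply div_le_div_of_nonneg_left (by norm_num) (by norm_num)
    nlinarith
  simp only [Dfun]
  linarith

lemma Dfun_monotone : Monotone Dfun := by
  intro a b hab
  have h0a : (0 : ℝ) ≤ max a 0 := le_max_right _ _
  have h0b : (0 : ℝ) ≤ max b 0 := le_max_right _ _
  have hmax : max a 0 ≤ max b 0 := max_le_max hab le_rfl
  have hc : Real.cosh (max a 0 / 2) ≤ Real.cosh (max b 0 / 2) := by
    rw [Real.cosh_le_cosh]
    rw [abs_of_nonneg (by linarith), abs_of_nonneg (by linarith)]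
    linarith
  have hca : (1 : ℝ) ≤ Real.cosh (max a 0 / 2) := Real.one_le_cosh _
  have hsq : Real.cosh (max a 0 / 2) ^ 2 ≤ Real.cosh (max b 0 / 2) ^ 2 := by nlinarith
  have : 1 / (4 * Real.cosh (max b 0 / 2) ^ 2) ≤ 1 / (4 * Real.cosh (max a 0 / 2) ^ 2) := by
    apply div_le_div_of_nonneg_left (by norm_num) (by nlinarith)
    nlinarith
  simp only [Dfun]
  linarith

lemma Gfun_convex : ConvexOn ℝ Set.univ Gfun := by
  apply Monotone.convexOn_univ_of_deriv Gfun_differentiable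
  rw [Gfun_deriv]; exact Dfun_monotone

lemma Gfun_monotone : Monotone Gfun := by
  apply monotone_of_deriv_nonneg Gfun_differentiable
  intro x; rw [Gfun_deriv]; exact Dfun_nonneg x

lemma Gfun_nonneg (z : ℝ) : 0 ≤ Gfun z := by
  rcases le_or_gt z 0 with h | h
  · simp [Gfun, h]
  · have := Gfun_monotone h.le
    simpa [Gfun] using this

lemma Gfun_of_nonpos {z : ℝ} (hz : z ≤ 0) : Gfun z = 0 := by simp [Gfun, hz]

lemma Gfun_eq_gfun {z : ℝ} (hz : 0 ≤ z) : Gfun z = gfun z := by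
  by_cases h : z ≤ 0
  · have : z = 0 := le_antisymm h hz
    simp [Gfun, this, gfun_zero]
  · simp [Gfun, h]

lemma convexOn_affine (a b : ℝ) : ConvexOn ℝ Set.univ (fun z : ℝ => a * z + b) := by
  refine ⟨convex_univ, fun x _ y _ p q hp hq hpq => ?_⟩
  simp only [smul_eq_mul]
  have : a * (p * x + q * y) + b = p * (a * x + b) + q * (a * y + b) := by
    linear_combination (-b) * hpq
  exact le_of_eq this

lemma convexOn_comp_neg {f : ℝ → ℝ} (hf : ConvexOn ℝ Set.univ f) :
    ConvexOn ℝ Set.univ (fun z => f (-z)) := by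
  refine ⟨convex_univ, fun x _ y _ p q hp hq hpq => ?_⟩
  have := hf.2 (Set.mem_univ (-x)) (Set.mem_univ (-y)) hp hq hpq
  simp only [smul_eq_mul] at this ⊢
  rw [show -(p * x + q * y) = p * -x + q * -y by ring]
  exact this

lemma Gfun_continuous : Continuous Gfun := Gfun_differentiable.continuous

lemma sigmoid_eq_tanh (z : ℝ) :
    1 / (1 + Real.exp (-z)) = (1 / 2) * (Real.tanh (z / 2) + 1) := by
  rw [Real.tanh_eq_sinh_div_cosh, Real.sinh_eq, Real.cosh_eq]
  have h1 : (0 : ℝ) < Real.exp (z / 2) := Real.exp_pos _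
  have h2 : (0 : ℝ) < Real.exp (-(z / 2)) := Real.exp_pos _
  have h3 : (0 : ℝ) < 1 + Real.exp (-z) := by positivity
  have hz : Real.exp (-z) = Real.exp (-(z / 2)) * Real.exp (-(z / 2)) := by
    rw [← Real.exp_add]; ring_nf
  have hz2 : Real.exp (z / 2) * Real.exp (-(z / 2)) = 1 := by
    rw [← Real.exp_add]; simp
  have h4 : Real.exp (-z / 2) = Real.exp (-(z / 2)) := by ring_nf
  field_simp
  linear_combination (-2 * Real.exp (z / 2)) * hz - 2 * Real.exp (-(z / 2)) * hz2

/-- DC decomposition of the sigmoid function. -/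
theorem sigmoid_dc_decomposition :
    ∀ (σ₁ σ₂ : ℝ → ℝ),
      (σ₁ = fun z => if z < 0 then (1 / 2) * (Real.tanh (z / 2) + 1 - z / 2)
                     else (1 / 2) * (z / 2 + 1)) →
      (σ₂ = fun z => if z < 0 then -z / 4
                     else (1 / 2) * (z / 2 - Real.tanh (z / 2))) →
      (∀ z, 1 / (1 + Real.exp (-z)) = σ₁ z - σ₂ z) ∧
      ConvexOn ℝ Set.univ σ₁ ∧ ConvexOn ℝ Set.univ σ₂ ∧
      Continuous σ₁ ∧ Continuous σ₂ := by
  intro σ₁ σ₂ h₁ h₂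
  -- rewrite σ₁ and σ₂ as maxima of convex continuous functions
  have hσ₂ : σ₂ = fun z => max (-z / 4) (Gfun z) := by
    funext z
    rw [h₂]
    by_cases h : z < 0
    · simp only [if_pos h]
      rw [max_eq_left]
      rw [Gfun_of_nonpos h.le]
      linarith
    · push_neg at h
      simp only [if_neg (not_lt.mpr h)]
      rw [max_eq_right, Gfun_eq_gfun h]
      · rfl
      · have := Gfun_nonneg z
        linarith
  have hσ₁ : σ₁ = fun z => max ((1 / 2) * (z / 2 + 1)) (1 / 2 + Gfun (-z)) := by
    funext z
    rw [h₁]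
    by_cases h : z < 0
    · simp only [if_pos h]
      rw [max_eq_right]
      · rw [Gfun_eq_gfun (by linarith : (0:ℝ) ≤ -z)]
        simp only [gfun]
        rw [show (-z / 2 : ℝ) = -(z / 2) by ring, Real.tanh_neg]
        ring
      · have := Gfun_nonneg (-z)
        nlinarith
    · push_neg at h
      simp only [if_neg (not_lt.mpr h)]
      rw [max_eq_left]
      rw [Gfun_of_nonpos (by linarith : -z ≤ 0)]
      linarith
  have hGneg : ConvexOn ℝ Set.univ (fun z : ℝ => 1 / 2 + Gfun (-z)) := by
    have h1 := (convexOn_comp_neg Gfun_convex).add_const (1 / 2 : ℝ)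
    convert h1 using 2 with z
    · rfl
    simp [Pi.add_apply, add_comm]
  have hlin1 : ConvexOn ℝ Set.univ (fun z : ℝ => (1 / 2) * (z / 2 + 1)) := by
    have := convexOn_affine (1 / 4) (1 / 2)
    convert this using 2 with z
    ring
  have hlin2 : ConvexOn ℝ Set.univ (fun z : ℝ => -z / 4) := by
    have := convexOn_affine (-(1 / 4)) 0
    convert this using 2 with z
    ring
  have hcont1 : Continuous σ₁ := by
    rw [hσ₁]
    exact (by continuity : Continuous fun z : ℝ => (1 / 2) * (z / 2 + 1)).max
      ((continuous_const.add (Gfun_continuous.comp continuous_neg)))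
  have hcont2 : Continuous σ₂ := by
    rw [hσ₂]
    exact (by continuity : Continuous fun z : ℝ => -z / 4).max Gfun_continuous
  have hcvx1 : ConvexOn ℝ Set.univ σ₁ := by
    rw [hσ₁]
    have := hlin1.sup hGneg
    exact this
  have hcvx2 : ConvexOn ℝ Set.univ σ₂ := by
    rw [hσ₂]
    have := hlin2.sup Gfun_convex
    exact this
  refine ⟨?_, hcvx1, hcvx2, hcont1, hcont2⟩
  intro z
  rw [h₁, h₂, sigmoid_eq_tanh]
  by_cases h : z < 0
  · simp only [if_pos h]; ring
  · simp only [if_neg h]; ring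
end
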